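/- Under the standing assumptions, let x ∈ dom ∂φ and x* ∈ ∂φ(x). The pair (x, x*) is a fixed point of the nonlinear Bregman–Kaczmarz iteration (i.e., for every index i the NBK update starting from (x,x*) with index i returns (x,x*)) if and only if for every i ∈ {1,…,n} it holds that f_i(x) = 0 or ∇f_i(x) = 0. -/

import Mathlib

open Set Filter Topology MeasureTheory ProbabilityTheory

noncomputable section

abbrev Euc (d : ℕ) := EuclideanSpace ℝ (Fin d)

/-- Real inner product on `ℝ^d`. -/
def rinn {d : ℕ} (x y : Euc d) : ℝ := inner ℝ x y

/-- Effective domain of an extended-real-valued function. -/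
def edom {d : ℕ} (φ : Euc d → EReal) : Set (Euc d) := {x | φ x ≠ ⊤}

/-- Convex subdifferential. -/
def subdiff {d : ℕ} (φ : Euc d → EReal) (x : Euc d) : Set (Euc d) :=
  {u | φ x ≠ ⊤ ∧ ∀ y : Euc d, φ x + ((rinn u (y - x) : ℝ) : EReal) ≤ φ y}

/-- Domain of the subdifferential. -/
def ddom {d : ℕ} (φ : Euc d → EReal) : Set (Euc d) := {x | (subdiff φ x).Nonempty}

/-- Bregman distance `D_φ^{u}(x,y) = φ(y) - φ(x) - ⟨u, y - x⟩`. -/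
def breg {d : ℕ} (φ : Euc d → EReal) (u x y : Euc d) : EReal :=
  φ y - φ x - ((rinn u (y - x) : ℝ) : EReal)

/-- Fenchel conjugate (extended-real-valued). -/
def econj {d : ℕ} (φ : Euc d → EReal) (u : Euc d) : EReal :=
  ⨆ x : Euc d, ((rinn u x : ℝ) : EReal) - φ x

/-- Real-valued Fenchel conjugate (under the standing assumptions `econj` is finite). -/
def rconj {d : ℕ} (φ : Euc d → EReal) (u : Euc d) : ℝ := (econj φ u).toReal

/-- Gradient `∇φ*` of the conjugate. -/
def gradconj {d : ℕ} (φ : Euc d → EReal) (u : Euc d) : Euc d := gradient (rconj φ) u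

def ConvexE {d : ℕ} (φ : Euc d → EReal) : Prop :=
  ∀ x y : Euc d, ∀ t : ℝ, 0 < t → t < 1 →
    φ (t • x + (1 - t) • y) ≤ (t : EReal) * φ x + ((1 - t : ℝ) : EReal) * φ y

def StrictConvexOnE {d : ℕ} (φ : Euc d → EReal) (s : Set (Euc d)) : Prop :=
  ∀ x ∈ s, ∀ y ∈ s, x ≠ y → ∀ t : ℝ, 0 < t → t < 1 →
    φ (t • x + (1 - t) • y) < (t : EReal) * φ x + ((1 - t : ℝ) : EReal) * φ y

def ProperE {d : ℕ} (φ : Euc d → EReal) : Prop :=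
  (∃ x, φ x ≠ ⊤) ∧ ∀ x, φ x ≠ ⊥

/-- `φ(x)/‖x‖ → ∞` as `‖x‖ → ∞`. -/
def Supercoercive {d : ℕ} (φ : Euc d → EReal) : Prop :=
  ∀ M : ℝ, ∃ R : ℝ, ∀ x : Euc d, R ≤ ‖x‖ → ((M * ‖x‖ : ℝ) : EReal) ≤ φ x

/-- Essential strict convexity: strict convexity on the relative interior of the domain. -/
def EssStrictConvexE {d : ℕ} (φ : Euc d → EReal) : Prop :=
  StrictConvexOnE φ (intrinsicInterior ℝ (edom φ))

/-- Standing assumptions on the distance generating function `φ` and constraint set `C`. -/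
structure PhiAssump {d : ℕ} (φ : Euc d → EReal) (C : Set (Euc d)) : Prop where
  Cne : C.Nonempty
  Cconv : Convex ℝ C
  Ccl : IsClosed C
  proper : ProperE φ
  conv : ConvexE φ
  lsc : LowerSemicontinuous φ
  coercive : Supercoercive φ
  essstrict : EssStrictConvexE φ
  domC : closure (ddom φ) = C
  ri_eq : ddom φ = intrinsicInterior ℝ (edom φ)

/-- Standing assumption (iv): Bregman distances tend to zero along convergent sequences. -/
def BregCont {d : ℕ} (φ : Euc d → EReal) : Prop :=
  ∀ x ∈ edom φ, ∀ xk : ℕ → Euc d, ∀ uk : ℕ → Euc d,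
    (∀ k, uk k ∈ subdiff φ (xk k)) → Tendsto xk atTop (𝓝 x) →
    Tendsto (fun k => breg φ (uk k) (xk k) x) atTop (𝓝 (0 : EReal))

/-- `f` is continuously differentiable on `Dset ⊇ C`, with gradients `f'`. -/
structure FAssump {d n : ℕ} (f : Fin n → Euc d → ℝ) (f' : Fin n → Euc d → Euc d)
    (Dset C : Set (Euc d)) : Prop where
  CsubD : C ⊆ Dset
  grad : ∀ i, ∀ x ∈ Dset, HasGradientAt (f i) (f' i x) x
  cont : ∀ i, ContinuousOn (f' i) Dset

/-- Solution set `S = C ∩ f⁻¹(0)`. -/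
def solSet {d n : ℕ} (f : Fin n → Euc d → ℝ) (C : Set (Euc d)) : Set (Euc d) :=
  {x ∈ C | ∀ i, f i x = 0}

/-- `N` is a norm on `ℝ^d`. -/
def IsANorm {d : ℕ} (N : Euc d → ℝ) : Prop :=
  (∀ x, N x = 0 ↔ x = 0) ∧ (∀ (c : ℝ) (x : Euc d), N (c • x) = |c| * N x) ∧
    ∀ x y : Euc d, N (x + y) ≤ N x + N y

/-- Dual norm of `N`. -/
def dualN {d : ℕ} (N : Euc d → ℝ) (u : Euc d) : ℝ :=
  sSup {r : ℝ | ∃ y : Euc d, N y ≤ 1 ∧ r = (rinn u y)}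

/-- `φ` is `σ`-strongly convex w.r.t. the norm `N`. -/
def StronglyConvexWrt {d : ℕ} (φ : Euc d → EReal) (σ : ℝ) (N : Euc d → ℝ) : Prop :=
  ∀ x ∈ ddom φ, ∀ y ∈ ddom φ, ∀ u ∈ subdiff φ x,
    ((σ / 2 * (N (x - y)) ^ 2 : ℝ) : EReal) ≤ breg φ u x y

/-- `φ` is `M`-smooth w.r.t. the norm `N`: finite everywhere (subdifferentiable everywhere)
with the quadratic upper bound. -/
def SmoothWrt {d : ℕ} (φ : Euc d → EReal) (M : ℝ) (N : Euc d → ℝ) : Prop :=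
  (∀ x : Euc d, (subdiff φ x).Nonempty) ∧
    ∀ x y : Euc d, ∀ u ∈ subdiff φ x,
      breg φ u x y ≤ ((M / 2 * (N (x - y)) ^ 2 : ℝ) : EReal)

/-- `g` (with gradient `g'`) is star-convex. -/
def StarConvexWith {d : ℕ} (g : Euc d → ℝ) (g' : Euc d → Euc d) : Prop :=
  (∃ z : Euc d, ∀ y, g z ≤ g y) ∧
    ∀ x z : Euc d, (∀ y, g z ≤ g y) → g x + rinn (g' x) (z - x) ≤ g z

/-- `g` (with gradient `g'`) is strictly star-convex. -/
def StrictStarConvexWith {d : ℕ} (g : Euc d → ℝ) (g' : Euc d → Euc d) : Prop :=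
  (∃ z : Euc d, ∀ y, g z ≤ g y) ∧
    ∀ x z : Euc d, (∀ y, g z ≤ g y) → x ≠ z → g x + rinn (g' x) (z - x) < g z

/-- `g` is `μ`-strongly star-convex relative to `φ`. -/
def StronglyStarConvexRel {d : ℕ} (g : Euc d → ℝ) (g' : Euc d → Euc d) (μ : ℝ)
    (φ : Euc d → EReal) : Prop :=
  (∃ z : Euc d, ∀ y, g z ≤ g y) ∧
    ∀ x : Euc d, ∀ u ∈ subdiff φ x, ∀ z : Euc d, (∀ y, g z ≤ g y) →
      ((g x + rinn (g' x) (z - x) : ℝ) : EReal) + (μ : EReal) * breg φ u x z ≤ (g z : EReal)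

def IsAffineF {d : ℕ} (g : Euc d → ℝ) : Prop :=
  ∃ (a : Euc d) (b : ℝ), ∀ x, g x = (rinn a x) + b

/-- Assumption 2: each component is either nonnegative star-convex with a zero in `dom ∂φ`,
nonnegative strictly star-convex, or affine. -/
def Assump2 {d n : ℕ} (φ : Euc d → EReal) (f : Fin n → Euc d → ℝ)
    (f' : Fin n → Euc d → Euc d) : Prop :=
  ∀ i : Fin n,
    ((∀ x, 0 ≤ f i x) ∧ StarConvexWith (f i) (f' i) ∧ ∃ z ∈ ddom φ, f i z = 0) ∨
    ((∀ x, 0 ≤ f i x) ∧ StrictStarConvexWith (f i) (f' i)) ∨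
    IsAffineF (f i)

/-- `g` is `L`-smooth w.r.t. the norm `N` (quadratic upper bound). -/
def LSmoothWrt {d : ℕ} (g : Euc d → ℝ) (g' : Euc d → Euc d) (L : ℝ) (N : Euc d → ℝ) : Prop :=
  ∀ x y : Euc d, g y ≤ g x + rinn (g' x) (y - x) + L / 2 * (N (x - y)) ^ 2

/-- Hyperplane given by the linearization of `f i` at `x`. -/
def linHyp {d n : ℕ} (f : Fin n → Euc d → ℝ) (f' : Fin n → Euc d → Euc d)
    (i : Fin n) (x : Euc d) : Set (Euc d) :=
  {y | f i x + rinn (f' i x) (y - x) = 0}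

/-- Objective of the one-dimensional dual problem defining the exact NBK step size. -/
def lineObj {d n : ℕ} (φ : Euc d → EReal) (f : Fin n → Euc d → ℝ)
    (f' : Fin n → Euc d → Euc d) (i : Fin n) (x u : Euc d) (t : ℝ) : ℝ :=
  rconj φ (u - t • f' i x) + t * (rinn (f' i x) x - f i x)

/-- Local tangential cone condition with constant `η` on `U`. -/
def TCCOn {d : ℕ} (g : Euc d → ℝ) (g' : Euc d → Euc d) (η : ℝ) (U : Set (Euc d)) : Prop :=
  ∀ x ∈ U, ∀ y ∈ U, |g x + rinn (g' x) (y - x) - g y| ≤ η * |g x - g y|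

/-- The set `B_{r,φ}(z)`. -/
def BregBall {d : ℕ} (φ : Euc d → EReal) (C : Set (Euc d)) (r : ℝ) (z : Euc d) :
    Set (Euc d) :=
  {x ∈ C | ∀ u ∈ subdiff φ x, breg φ u x z ≤ (r : EReal)}

end

/-- One update of the Nonlinear Bregman–Kaczmarz (NBK) method with component `i`,
mapping `(x, u)` to `(x', u')`. -/
def NBKStep {d n : ℕ} (φ : Euc d → EReal) (σ : ℝ) (N : Euc d → ℝ)
    (f : Fin n → Euc d → ℝ) (f' : Fin n → Euc d → Euc d)
    (i : Fin n) (x u x' u' : Euc d) : Prop :=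
  ((f i x = 0 ∨ f' i x = 0) → x' = x ∧ u' = u) ∧
  (¬(f i x = 0 ∨ f' i x = 0) →
    ∃ t : ℝ,
      ((linHyp f f' i x ∩ ddom φ).Nonempty →
        ∀ s : ℝ, lineObj φ f f' i x u t ≤ lineObj φ f f' i x u s) ∧
      (¬(linHyp f f' i x ∩ ddom φ).Nonempty →
        t = σ * f i x / (dualN N (f' i x)) ^ 2) ∧
      u' = u - t • f' i x ∧ x' = gradconj φ u')


/-!
If `c = f i x ≠ 0` and `a = f' i x ≠ 0`, some NBK step replaces `u` by `u - t • a` with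
`t ≠ 0`, so `(x, u)` is not fixed. For the relaxed step this is `σ > 0` together with
positivity of the dual norm. For the exact step, the dual objective
`g s = φ*(u - s • a) + s (⟨a, x⟩ - c)` attains its minimum, and `0` is not a minimizer since
formally `g'(0) = -⟨a, ∇φ*(u)⟩ + ⟨a, x⟩ - c = -c`. The derivative is replaced by a limit
argument: maximizers in the definition of `φ*(u - s • a)` tend to `x` as `s → 0`, because `∂φ`
has closed graph, bounded preimages of bounded sets (supercoercivity), and is injective
(essential strict convexity).
-/

theorem LowerSemicontinuous.le_of_tendsto_of_le_coe {α ι : Type*} [TopologicalSpace α]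
    {f : α → EReal} (hf : LowerSemicontinuous f) {l : Filter ι} [l.NeBot] {w : ι → α} {z : α}
    {ρ : ι → ℝ} {ρ₀ : ℝ} (hw : Tendsto w l (𝓝 z)) (hρ : Tendsto ρ l (𝓝 ρ₀))
    (hle : ∀ k, f (w k) ≤ ρ k) : f z ≤ ρ₀ := by
  by_contra! hlt
  obtain ⟨b, hρb, hbz⟩ := EReal.exists_between_coe_real hlt
  rw [EReal.coe_lt_coe_iff] at hρb
  obtain ⟨k, hk1, hk2⟩ :=
    ((hw.eventually (hf z b hbz)).and (hρ.eventually (gt_mem_nhds hρb))).exists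
  have := hk1.trans_le (hle k)
  rw [EReal.coe_lt_coe_iff] at this
  linarith

section IntrinsicInterior

variable {V : Type*} [NormedAddCommGroup V] [NormedSpace ℝ V] {s : Set V} {y z : V}

theorem exists_pos_smul_sub_add_mem_of_mem_intrinsicInterior (hz : z ∈ intrinsicInterior ℝ s)
    (hy : y ∈ s) : ∃ δ : ℝ, 0 < δ ∧ δ • (z - y) + z ∈ s := by
  obtain ⟨z', hz', rfl⟩ := hz
  let γ : ℝ → affineSpan ℝ s := fun δ =>
    ⟨δ • ((z' : V) - y) + z',
      AffineSubspace.smul_vsub_vadd_mem _ δ z'.2 (subset_affineSpan ℝ s hy) z'.2⟩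
  have hγ : Continuous γ :=
    (by fun_prop : Continuous fun δ : ℝ => δ • ((z' : V) - y) + z').subtype_mk _
  have hγ0 : γ 0 = z' := Subtype.ext (by simp [γ])
  have hev : ∀ᶠ δ in 𝓝 (0 : ℝ), γ δ ∈ interior (((↑) : affineSpan ℝ s → V) ⁻¹' s) :=
    hγ.continuousAt.preimage_mem_nhds (hγ0 ▸ isOpen_interior.mem_nhds hz')
  obtain ⟨δ, hδ, hδpos⟩ := ((hev.filter_mono nhdsWithin_le_nhds).and
    (self_mem_nhdsWithin (s := Ioi 0))).exists
  exact ⟨δ, hδpos, interior_subset (s := ((↑) : affineSpan ℝ s → V) ⁻¹' s) hδ⟩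

theorem LinearMap.eq_of_forall_le_of_mem_intrinsicInterior (ℓ : V →ₗ[ℝ] ℝ)
    (hz : z ∈ intrinsicInterior ℝ s) (hle : ∀ w ∈ s, ℓ z ≤ ℓ w) (hy : y ∈ s) : ℓ y = ℓ z := by
  obtain ⟨δ, hδ, hmem⟩ := exists_pos_smul_sub_add_mem_of_mem_intrinsicInterior hz hy
  have h := hle _ hmem
  rw [map_add, map_smul, map_sub, smul_eq_mul] at h
  refine le_antisymm ?_ (hle y hy)
  nlinarith

end IntrinsicInterior

theorem Continuous.exists_forall_le_of_affine_minorants {G : ℝ → ℝ} (hG : Continuous G)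
    {A B p q : ℝ} (hp : 0 < p) (hq : q < 0) (hA : ∀ s, A + s * p ≤ G s)
    (hB : ∀ s, B + s * q ≤ G s) : ∃ t, ∀ s, G t ≤ G s := by
  refine hG.exists_forall_le ?_
  rw [cocompact_eq_atBot_atTop]
  exact tendsto_sup.2
    ⟨tendsto_atTop_mono hB
        (tendsto_atTop_add_const_left _ B (tendsto_id.atBot_mul_const_of_neg hq)),
      tendsto_atTop_mono hA (tendsto_atTop_add_const_left _ A (tendsto_id.atTop_mul_const hp))⟩

section Conjugate

variable {d : ℕ} {φ : Euc d → EReal}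

theorem ProperE.exists_eq_coe (hp : ProperE φ) {y : Euc d} (hy : φ y ≠ ⊤) :
    ∃ r : ℝ, φ y = r :=
  ⟨_, (EReal.coe_toReal hy (hp.2 y)).symm⟩

theorem rinn_sub_smul_left (u a y : Euc d) (s : ℝ) :
    rinn (u - s • a) y = rinn u y - s * rinn a y := by
  simp only [rinn, inner_sub_left, real_inner_smul_left]

theorem add_rinn_le_of_mem_subdiff {u x y : Euc d} {p r : ℝ} (hu : u ∈ subdiff φ x)
    (hx : φ x = p) (hy : φ y = r) : p + rinn u y - rinn u x ≤ r := by
  have h := hu.2 y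
  rwa [hx, hy, ← EReal.coe_add, EReal.coe_le_coe_iff, rinn, inner_sub_right, ← add_sub_assoc]
    at h

theorem mem_subdiff_of_forall (hp : ProperE φ) {u x : Euc d} {p : ℝ} (hx : φ x = p)
    (h : ∀ y (r : ℝ), φ y = r → p + rinn u y - rinn u x ≤ r) : u ∈ subdiff φ x := by
  refine ⟨hx ▸ EReal.coe_ne_top p, fun y => ?_⟩
  by_cases hy : φ y = ⊤
  · exact hy ▸ le_top
  obtain ⟨r, hr⟩ := hp.exists_eq_coe hy
  rw [hx, hr, ← EReal.coe_add, EReal.coe_le_coe_iff, rinn, inner_sub_right, ← add_sub_assoc]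
  exact h y r hr

theorem rconj_eq_of_mem_subdiff (hp : ProperE φ) {u x : Euc d} {p : ℝ} (hu : u ∈ subdiff φ x)
    (hx : φ x = p) : rconj φ u = rinn u x - p := by
  suffices econj φ u = ((rinn u x - p : ℝ) : EReal) by rw [rconj, this, EReal.toReal_coe]
  refine le_antisymm (iSup_le fun y => ?_) (le_iSup_of_le x (by rw [hx, EReal.coe_sub]))
  by_cases hy : φ y = ⊤
  · rw [hy, EReal.sub_top]
    exact bot_le
  obtain ⟨r, hr⟩ := hp.exists_eq_coe hy
  rw [hr, ← EReal.coe_sub, EReal.coe_le_coe_iff]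
  linarith [add_rinn_le_of_mem_subdiff hu hx hr]

theorem Supercoercive.exists_norm_le_add_neg_rinn (hc : Supercoercive φ) (hp : ProperE φ)
    (v : Euc d) : ∃ R, ∀ y, R ≤ ‖y‖ → ((‖y‖ : ℝ) : EReal) ≤ φ y + ((-rinn v y : ℝ) : EReal) := by
  obtain ⟨R, hR⟩ := hc (‖v‖ + 1)
  refine ⟨R, fun y hy => ?_⟩
  by_cases hyt : φ y = ⊤
  · simp [hyt]
  obtain ⟨r, hr⟩ := hp.exists_eq_coe hyt
  have h1 := hR y hy
  rw [hr, EReal.coe_le_coe_iff] at h1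
  rw [hr, ← EReal.coe_add, EReal.coe_le_coe_iff]
  have h2 : rinn v y ≤ ‖v‖ * ‖y‖ := real_inner_le_norm v y
  linarith

/-- The minimizer of `φ - ⟨v, ·⟩` over a large ball is a global minimizer: outside the ball
supercoercivity makes `φ - ⟨v, ·⟩` exceed its value at a fixed point of `dom φ`. -/
theorem exists_mem_subdiff (hp : ProperE φ) (hl : LowerSemicontinuous φ) (hc : Supercoercive φ)
    (v : Euc d) : ∃ z, v ∈ subdiff φ z := by
  set ψ : Euc d → EReal := fun y => φ y + ((-rinn v y : ℝ) : EReal)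
  have hψ (y : Euc d) : ψ y = φ y + ((-rinn v y : ℝ) : EReal) := rfl
  have hψl : LowerSemicontinuous ψ :=
    hl.add' (continuous_coe_real_ereal.comp (by unfold rinn; fun_prop)).lowerSemicontinuous
      fun y => EReal.continuousAt_add (Or.inr (EReal.coe_ne_bot _)) (Or.inr (EReal.coe_ne_top _))
  obtain ⟨x₀, hx₀⟩ := hp.1
  obtain ⟨p₀, hp₀⟩ := hp.exists_eq_coe hx₀
  have hψx₀ : ψ x₀ = ((p₀ - rinn v x₀ : ℝ) : EReal) := by
    rw [hψ, hp₀, ← EReal.coe_add, sub_eq_add_neg]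
  obtain ⟨R, hfar⟩ := hc.exists_norm_le_add_neg_rinn hp v
  set ρ := max R (max ‖x₀‖ (p₀ - rinn v x₀))
  have hx₀ρ : x₀ ∈ Metric.closedBall 0 ρ :=
    mem_closedBall_zero_iff.2 (le_max_of_le_right (le_max_left _ _))
  obtain ⟨z, -, hzmin⟩ :=
    (hψl.lowerSemicontinuousOn _).exists_isMinOn ⟨x₀, hx₀ρ⟩ (isCompact_closedBall 0 ρ)
  have hglob : ∀ y, ψ z ≤ ψ y := by
    intro y
    by_cases hy : ‖y‖ ≤ ρ
    · exact hzmin (mem_closedBall_zero_iff.2 hy)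
    push Not at hy
    calc ψ z ≤ ψ x₀ := hzmin hx₀ρ
      _ ≤ ((‖y‖ : ℝ) : EReal) := by
        rw [hψx₀, EReal.coe_le_coe_iff]
        exact (le_max_right _ _).trans ((le_max_right _ _).trans hy.le)
      _ ≤ ψ y := hfar y ((le_max_left _ _).trans hy.le)
  have hzt : φ z ≠ ⊤ := by
    intro h
    have := hglob x₀
    rw [hψx₀, hψ, h, EReal.top_add_coe] at this
    exact EReal.coe_ne_top _ (top_le_iff.1 this)
  obtain ⟨p, hpz⟩ := hp.exists_eq_coe hzt
  refine ⟨z, mem_subdiff_of_forall hp hpz fun y r hr => ?_⟩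
  have := hglob y
  rw [hψ, hψ, hpz, hr, ← EReal.coe_add, ← EReal.coe_add, EReal.coe_le_coe_iff] at this
  linarith

theorem rinn_sub_le_rconj (hp : ProperE φ) (hl : LowerSemicontinuous φ) (hc : Supercoercive φ)
    (v : Euc d) {y : Euc d} {r : ℝ} (hy : φ y = r) : rinn v y - r ≤ rconj φ v := by
  obtain ⟨z, hz⟩ := exists_mem_subdiff hp hl hc v
  obtain ⟨p, hpz⟩ := hp.exists_eq_coe hz.1
  rw [rconj_eq_of_mem_subdiff hp hz hpz]
  linarith [add_rinn_le_of_mem_subdiff hz hpz hy]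

theorem convexOn_rconj (hp : ProperE φ) (hl : LowerSemicontinuous φ) (hc : Supercoercive φ) :
    ConvexOn ℝ univ (rconj φ) := by
  refine ⟨convex_univ, fun v _ w _ a b ha hb hab => ?_⟩
  obtain ⟨z, hz⟩ := exists_mem_subdiff hp hl hc (a • v + b • w)
  obtain ⟨r, hr⟩ := hp.exists_eq_coe hz.1
  have hv := mul_le_mul_of_nonneg_left (rinn_sub_le_rconj hp hl hc v hr) ha
  have hw := mul_le_mul_of_nonneg_left (rinn_sub_le_rconj hp hl hc w hr) hb
  have hr' : (a + b) * r = r := by rw [hab, one_mul]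
  rw [rconj_eq_of_mem_subdiff hp hz hr, smul_eq_mul, smul_eq_mul, rinn, inner_add_left,
    real_inner_smul_left, real_inner_smul_left]
  simp only [rinn] at hv hw
  linarith

theorem continuous_rconj (hp : ProperE φ) (hl : LowerSemicontinuous φ) (hc : Supercoercive φ) :
    Continuous (rconj φ) :=
  continuousOn_univ.1 ((convexOn_rconj hp hl hc).continuousOn isOpen_univ)

/-- Adding the subgradient inequalities at `x` and `y` at their midpoint contradicts strict
convexity. -/
theorem eq_of_mem_subdiff_of_mem_subdiff (hp : ProperE φ)
    (hri : ddom φ = intrinsicInterior ℝ (edom φ)) (hst : EssStrictConvexE φ) {u x y : Euc d}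
    (hx : u ∈ subdiff φ x) (hy : u ∈ subdiff φ y) : x = y := by
  by_contra hxy
  obtain ⟨p, hp'⟩ := hp.exists_eq_coe hx.1
  obtain ⟨q, hq⟩ := hp.exists_eq_coe hy.1
  have hlt := hst x (hri ▸ ⟨u, hx⟩) y (hri ▸ ⟨u, hy⟩) hxy (1 / 2) (by norm_num) (by norm_num)
  set m := (1 / 2 : ℝ) • x + (1 - 1 / 2 : ℝ) • y with hm
  rw [hp', hq, ← EReal.coe_mul, ← EReal.coe_mul, ← EReal.coe_add] at hlt
  obtain ⟨μ, hμ⟩ := hp.exists_eq_coe (ne_top_of_lt hlt)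
  rw [hμ, EReal.coe_lt_coe_iff] at hlt
  have hsum : rinn u m = (rinn u x + rinn u y) / 2 := by
    simp only [hm, rinn, inner_add_right, real_inner_smul_right]
    ring
  linarith [add_rinn_le_of_mem_subdiff hx hp' hμ, add_rinn_le_of_mem_subdiff hy hq hμ]

theorem exists_norm_le_of_mem_subdiff (hp : ProperE φ) (hc : Supercoercive φ) (M : ℝ) :
    ∃ B, ∀ v z : Euc d, ‖v‖ ≤ M → v ∈ subdiff φ z → ‖z‖ ≤ B := by
  obtain ⟨x₀, hx₀⟩ := hp.1
  obtain ⟨p₀, hp₀⟩ := hp.exists_eq_coe hx₀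
  obtain ⟨R, hR⟩ := hc (M + 1)
  refine ⟨max R (p₀ + M * ‖x₀‖), fun v z hv hz => ?_⟩
  by_contra! hzB
  rw [max_lt_iff] at hzB
  obtain ⟨q, hq⟩ := hp.exists_eq_coe hz.1
  have h1 := hR z hzB.1.le
  rw [hq, EReal.coe_le_coe_iff] at h1
  have h2 := add_rinn_le_of_mem_subdiff hz hq hp₀
  have h3 : |rinn v x₀ - rinn v z| ≤ M * (‖x₀‖ + ‖z‖) := by
    rw [rinn, rinn, ← inner_sub_right]
    exact (abs_real_inner_le_norm v _).trans
      (mul_le_mul hv (norm_sub_le x₀ z) (norm_nonneg _) ((norm_nonneg v).trans hv))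
  linarith [hzB.2, neg_abs_le (rinn v x₀ - rinn v z)]

theorem mem_subdiff_of_tendsto (hp : ProperE φ) (hl : LowerSemicontinuous φ)
    {v z : ℕ → Euc d} {u x : Euc d} (hv : Tendsto v atTop (𝓝 u)) (hz : Tendsto z atTop (𝓝 x))
    (h : ∀ k, v k ∈ subdiff φ (z k)) : u ∈ subdiff φ x := by
  have hbound : ∀ y (r : ℝ), φ y = r → φ x ≤ ((r - (rinn u y - rinn u x) : ℝ) : EReal) := by
    intro y r hr
    refine hl.le_of_tendsto_of_le_coe (ρ := fun k => r - (rinn (v k) y - rinn (v k) (z k))) hz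
      (tendsto_const_nhds.sub ((hv.inner tendsto_const_nhds).sub (hv.inner hz))) fun k => ?_
    obtain ⟨p, hpk⟩ := hp.exists_eq_coe (h k).1
    rw [hpk, EReal.coe_le_coe_iff]
    linarith [add_rinn_le_of_mem_subdiff (h k) hpk hr]
  obtain ⟨x₀, hx₀⟩ := hp.1
  obtain ⟨p₀, hp₀⟩ := hp.exists_eq_coe hx₀
  obtain ⟨p, hpx⟩ := hp.exists_eq_coe (ne_top_of_le_ne_top (EReal.coe_ne_top _) (hbound x₀ p₀ hp₀))
  refine mem_subdiff_of_forall hp hpx fun y r hr => ?_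
  have := hbound y r hr
  rw [hpx, EReal.coe_le_coe_iff] at this
  linarith

theorem tendsto_of_mem_subdiff (hp : ProperE φ) (hl : LowerSemicontinuous φ)
    (hc : Supercoercive φ) (hri : ddom φ = intrinsicInterior ℝ (edom φ))
    (hst : EssStrictConvexE φ) {v z : ℕ → Euc d} {u x : Euc d} (hv : Tendsto v atTop (𝓝 u))
    (hu : u ∈ subdiff φ x) (hz : ∀ k, v k ∈ subdiff φ (z k)) : Tendsto z atTop (𝓝 x) := by
  obtain ⟨M, hM⟩ := isBounded_iff_forall_norm_le.1 (Metric.isBounded_range_of_tendsto v hv)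
  obtain ⟨B, hB⟩ := exists_norm_le_of_mem_subdiff hp hc M
  refine tendsto_of_subseq_tendsto fun ns hns => ?_
  obtain ⟨x', -, ms, hms, hlim⟩ := tendsto_subseq_of_bounded (Metric.isBounded_closedBall)
    fun k => mem_closedBall_zero_iff.2 (hB _ _ (hM _ ⟨ns k, rfl⟩) (hz (ns k)))
  have hx' : u ∈ subdiff φ x' :=
    mem_subdiff_of_tendsto hp hl (hv.comp (hns.comp hms.tendsto_atTop)) hlim fun k => hz _
  exact ⟨ms, eq_of_mem_subdiff_of_mem_subdiff hp hri hst hx' hu ▸ hlim⟩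

/-- Maximizers `z_k` of `⟨u - (c/(k+1)) a, ·⟩ - φ` converge to `x`, while minimality of `0`
forces `c ⟨a, z_k⟩ ≤ c (⟨a, x⟩ - c)`; in the limit `c² ≤ 0`. -/
theorem eq_zero_of_forall_rconj_le (hp : ProperE φ) (hl : LowerSemicontinuous φ)
    (hc : Supercoercive φ) (hri : ddom φ = intrinsicInterior ℝ (edom φ))
    (hst : EssStrictConvexE φ) {u x : Euc d} (hu : u ∈ subdiff φ x) (a : Euc d) (c : ℝ)
    (hmin : ∀ s : ℝ, rconj φ u ≤ rconj φ (u - s • a) + s * (rinn a x - c)) : c = 0 := by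
  set δ : ℕ → ℝ := fun k => 1 / ((k : ℝ) + 1)
  have hδpos (k : ℕ) : 0 < δ k := Nat.one_div_pos_of_nat
  choose z hz using fun k => exists_mem_subdiff hp hl hc (u - (c * δ k) • a)
  have hv : Tendsto (fun k => u - (c * δ k) • a) atTop (𝓝 u) := by
    have := (tendsto_one_div_add_atTop_nhds_zero_nat.const_mul c).smul_const a
    rw [mul_zero, zero_smul] at this
    simpa only [sub_zero] using tendsto_const_nhds (x := u) |>.sub this
  have hzx := tendsto_of_mem_subdiff hp hl hc hri hst hv hu hz
  have hstep (k : ℕ) : c * rinn a (z k) ≤ c * (rinn a x - c) := by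
    obtain ⟨r, hr⟩ := hp.exists_eq_coe (hz k).1
    have h1 := rconj_eq_of_mem_subdiff hp (hz k) hr
    have h2 := rinn_sub_le_rconj hp hl hc u hr
    rw [rinn_sub_smul_left] at h1
    refine le_of_mul_le_mul_left ?_ (hδpos k)
    linarith [hmin (c * δ k)]
  have hlim : c * rinn a x ≤ c * (rinn a x - c) :=
    le_of_tendsto' ((tendsto_const_nhds.inner hzx).const_mul c) hstep
  nlinarith

theorem rconj_sub_smul_add_mul_eq (hp : ProperE φ) (hl : LowerSemicontinuous φ)
    (hc : Supercoercive φ) {a : Euc d} {β : ℝ} (hflat : ∀ y ∈ edom φ, rinn a y = β)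
    (u : Euc d) (s : ℝ) : rconj φ (u - s • a) + s * β = rconj φ u := by
  have hle : ∀ (v : Euc d) (t : ℝ), rconj φ (v - t • a) + t * β ≤ rconj φ v := by
    intro v t
    obtain ⟨z, hz⟩ := exists_mem_subdiff hp hl hc (v - t • a)
    obtain ⟨r, hr⟩ := hp.exists_eq_coe hz.1
    rw [rconj_eq_of_mem_subdiff hp hz hr, rinn_sub_smul_left, hflat z hz.1]
    linarith [rinn_sub_le_rconj hp hl hc v hr]
  have := hle (u - s • a) (-s)
  rw [neg_smul, sub_neg_eq_add, sub_add_cancel] at this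
  linarith [hle u s]

/-- If `dom φ` meets both open sides of `{⟨a, ·⟩ = β}`, the objective is coercive; otherwise
`dom φ` lies in a closed half-space whose boundary meets `ri (dom φ)`, so it lies in the
hyperplane and the objective is constant. -/
theorem exists_forall_rconj_sub_smul_le (hp : ProperE φ) (hl : LowerSemicontinuous φ)
    (hc : Supercoercive φ) (u a : Euc d) {β : ℝ} {z : Euc d}
    (hz : z ∈ intrinsicInterior ℝ (edom φ)) (hza : rinn a z = β) :
    ∃ t : ℝ, ∀ s : ℝ, rconj φ (u - t • a) + t * β ≤ rconj φ (u - s • a) + s * β := by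
  have hminor : ∀ y (r : ℝ), φ y = r → ∀ s : ℝ,
      (rinn u y - r) + s * (β - rinn a y) ≤ rconj φ (u - s • a) + s * β := by
    intro y r hr s
    have := rinn_sub_le_rconj hp hl hc (u - s • a) hr
    rw [rinn_sub_smul_left] at this
    linarith
  by_cases hflat : ∀ y ∈ edom φ, rinn a y = β
  · exact ⟨0, fun s => by rw [rconj_sub_smul_add_mul_eq hp hl hc hflat,
      rconj_sub_smul_add_mul_eq hp hl hc hflat]⟩
  have hconst (b : Euc d) (hb : ∀ y ∈ edom φ, rinn b z ≤ rinn b y) :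
      ∀ y ∈ edom φ, rinn b y = rinn b z :=
    fun y hy => (innerₛₗ ℝ b).eq_of_forall_le_of_mem_intrinsicInterior hz hb hy
  obtain ⟨y₁, hy₁, hy₁β⟩ : ∃ y ∈ edom φ, rinn a y < β := by
    by_contra! hge
    exact hflat fun y hy => hza ▸ hconst a (fun w hw => hza ▸ hge w hw) y hy
  obtain ⟨y₂, hy₂, hy₂β⟩ : ∃ y ∈ edom φ, β < rinn a y := by
    by_contra! hle
    refine hflat fun y hy => ?_
    have h := hconst (-a) (fun w hw => ?_) y hy
    · simp only [rinn, inner_neg_left, neg_inj] at h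
      exact h.trans hza
    · simp only [rinn, inner_neg_left, neg_le_neg_iff]
      exact (hle w hw).trans_eq hza.symm
  obtain ⟨r₁, hr₁⟩ := hp.exists_eq_coe hy₁
  obtain ⟨r₂, hr₂⟩ := hp.exists_eq_coe hy₂
  exact Continuous.exists_forall_le_of_affine_minorants
    (((continuous_rconj hp hl hc).comp (by fun_prop)).add (by fun_prop))
    (sub_pos.2 hy₁β) (sub_neg.2 hy₂β) (hminor y₁ r₁ hr₁) (hminor y₂ r₂ hr₂)

end Conjugate

namespace IsANorm

variable {d : ℕ} {N : Euc d → ℝ}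

theorem nonneg (hN : IsANorm N) (y : Euc d) : 0 ≤ N y := by
  have h := hN.2.2 y (-y)
  rw [add_neg_cancel, (hN.1 0).2 rfl, ← neg_one_smul ℝ y, hN.2.1] at h
  norm_num at h
  linarith

theorem pos (hN : IsANorm N) {y : Euc d} (hy : y ≠ 0) : 0 < N y :=
  (hN.nonneg y).lt_of_ne fun h => hy ((hN.1 y).1 h.symm)

theorem continuous (hN : IsANorm N) : Continuous N := by
  have hconv : ConvexOn ℝ univ N := by
    refine ⟨convex_univ, fun p _ q _ a b ha hb _ => ?_⟩
    calc N (a • p + b • q) ≤ N (a • p) + N (b • q) := hN.2.2 _ _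
      _ = a • N p + b • N q := by rw [hN.2.1, hN.2.1, abs_of_nonneg ha, abs_of_nonneg hb]; rfl
  exact continuousOn_univ.1 (hconv.continuousOn isOpen_univ)

/-- `m` is the minimum of `N` on the Euclidean unit sphere. -/
theorem exists_pos_mul_norm_le [Nontrivial (Euc d)] (hN : IsANorm N) :
    ∃ m > 0, ∀ y, m * ‖y‖ ≤ N y := by
  obtain ⟨w, hw, hmin⟩ := (isCompact_sphere (0 : Euc d) 1).exists_isMinOn
    (NormedSpace.sphere_nonempty.2 zero_le_one) hN.continuous.continuousOn
  refine ⟨N w, hN.pos (ne_zero_of_mem_sphere one_ne_zero ⟨w, hw⟩), fun y => ?_⟩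
  rcases eq_or_ne y 0 with rfl | hy
  · simp [(hN.1 0).2 rfl]
  have h : N w ≤ N (‖y‖⁻¹ • y) := hmin (by simp [norm_smul, hy])
  rw [hN.2.1, abs_inv, abs_norm, le_inv_mul_iff₀ (norm_pos_iff.2 hy)] at h
  linarith

theorem dualN_pos (hN : IsANorm N) {a : Euc d} (ha : a ≠ 0) : 0 < dualN N a := by
  have := nontrivial_of_ne a 0 ha
  obtain ⟨m, hm, hmN⟩ := hN.exists_pos_mul_norm_le
  have hbdd : BddAbove {r : ℝ | ∃ y : Euc d, N y ≤ 1 ∧ r = rinn a y} := by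
    refine ⟨‖a‖ / m, ?_⟩
    rintro _ ⟨y, hy, rfl⟩
    have hym : ‖y‖ ≤ 1 / m := by rw [le_div_iff₀ hm]; linarith [hmN y]
    calc rinn a y ≤ ‖a‖ * ‖y‖ := real_inner_le_norm a y
      _ ≤ ‖a‖ * (1 / m) := mul_le_mul_of_nonneg_left hym (norm_nonneg a)
      _ = ‖a‖ / m := by ring
  have hNa := hN.pos ha
  have hmem : ‖a‖ ^ 2 / N a ∈ {r : ℝ | ∃ y : Euc d, N y ≤ 1 ∧ r = rinn a y} := by
    refine ⟨(N a)⁻¹ • a, ?_, ?_⟩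
    · rw [hN.2.1, abs_inv, abs_of_pos hNa, inv_mul_cancel₀ hNa.ne']
    · rw [rinn, real_inner_smul_right, real_inner_self_eq_norm_sq, inv_mul_eq_div]
  exact (div_pos (pow_pos (norm_pos_iff.2 ha) 2) hNa).trans_le (le_csSup hbdd hmem)

end IsANorm

theorem exists_ne_zero_forall_lineObj_le {d n : ℕ} {φ : Euc d → EReal} {C : Set (Euc d)}
    (hφ : PhiAssump φ C) {f : Fin n → Euc d → ℝ} {f' : Fin n → Euc d → Euc d} {i : Fin n}
    {x u : Euc d} (hu : u ∈ subdiff φ x) (hH : (linHyp f f' i x ∩ ddom φ).Nonempty)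
    (hfi : f i x ≠ 0) :
    ∃ t ≠ 0, ∀ s, lineObj φ f f' i x u t ≤ lineObj φ f f' i x u s := by
  obtain ⟨z, hzH, hzD⟩ := hH
  have hza : rinn (f' i x) z = rinn (f' i x) x - f i x := by
    have h : f i x + rinn (f' i x) (z - x) = 0 := hzH
    rw [rinn, inner_sub_right] at h
    rw [rinn, rinn]
    linarith
  obtain ⟨t, ht⟩ := exists_forall_rconj_sub_smul_le hφ.proper hφ.lsc hφ.coercive u (f' i x)
    (hφ.ri_eq ▸ hzD) hza
  refine ⟨t, fun h0 => hfi ?_, ht⟩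
  subst h0
  exact eq_zero_of_forall_rconj_le hφ.proper hφ.lsc hφ.coercive hφ.ri_eq hφ.essstrict hu
    (f' i x) (f i x) fun s => by simpa using ht s

theorem statement1_general {d n : ℕ} (φ : Euc d → EReal) (C : Set (Euc d))
    (f : Fin n → Euc d → ℝ) (f' : Fin n → Euc d → Euc d)
    (hφ : PhiAssump φ C)
    (σ : ℝ) (hσ : 0 < σ) (N : Euc d → ℝ) (hN : IsANorm N)
    (x u : Euc d) (hu : u ∈ subdiff φ x) :
    (∀ (i : Fin n) (x' u' : Euc d), NBKStep φ σ N f f' i x u x' u' → x' = x ∧ u' = u) ↔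
      ∀ i : Fin n, f i x = 0 ∨ f' i x = 0 := by
  refine ⟨fun hfix i => ?_, fun h i _ _ hstep => hstep.1 (h i)⟩
  by_contra hres
  obtain ⟨hfi, ha⟩ := not_or.1 hres
  obtain ⟨t, ht, hstep⟩ : ∃ t : ℝ, t ≠ 0 ∧
      NBKStep φ σ N f f' i x u (gradconj φ (u - t • f' i x)) (u - t • f' i x) := by
    by_cases hH : (linHyp f f' i x ∩ ddom φ).Nonempty
    · obtain ⟨t, ht, hmin⟩ := exists_ne_zero_forall_lineObj_le hφ hu hH hfi
      exact ⟨t, ht, fun h => absurd h hres,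
        fun _ => ⟨t, fun _ => hmin, fun h => absurd hH h, rfl, rfl⟩⟩
    · refine ⟨σ * f i x / dualN N (f' i x) ^ 2, ?_, fun h => absurd h hres,
        fun _ => ⟨_, fun h => absurd h hH, fun _ => rfl, rfl, rfl⟩⟩
      exact div_ne_zero (mul_ne_zero hσ.ne' hfi) (pow_ne_zero 2 (hN.dualN_pos ha).ne')
  exact smul_ne_zero ht ha (sub_eq_self.1 (hfix i _ _ hstep).2)

/-- fixed points of the NBK method. -/
theorem statement1 {d n : ℕ} (φ : Euc d → EReal) (C Dset : Set (Euc d))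
    (f : Fin n → Euc d → ℝ) (f' : Fin n → Euc d → Euc d)
    (hφ : PhiAssump φ C) (hB : BregCont φ) (hf : FAssump f f' Dset C)
    (hS : (solSet f C).Nonempty)
    (σ : ℝ) (hσ : 0 < σ) (N : Euc d → ℝ) (hN : IsANorm N)
    (x u : Euc d) (hx : x ∈ ddom φ) (hu : u ∈ subdiff φ x) :
    (∀ (i : Fin n) (x' u' : Euc d), NBKStep φ σ N f f' i x u x' u' → x' = x ∧ u' = u) ↔
      ∀ i : Fin n, f i x = 0 ∨ f' i x = 0 :=
  statement1_general φ C f f' hφ σ hσ N hN x u hu
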